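/- arXiv:1802.08076 — 5 statements merged into one kernel-verified Lean document; each statement's English description precedes it below -/
import Mathlib

section
/- For every regular LK-proof π, the sequent Dp(Exp(π)) is a propositional tautology. -/
/-! Preamble: first-order NNF formulas, expansion trees, expansion proofs with cut,
    LK, LKE, and the cut-reduction relation, following
    "Expansion Trees with Cut". -/

/-- First-order terms. -/
inductive Term : Type where
  | var : ℕ → Term
  | func : ℕ → List Term → Term

namespace Term

/-- The list of variables occurring in a term. -/
def varList : Term → List ℕ
  | .var n => [n]
  | .func _ ts => ts.attach.flatMap fun t => varList t.1
decreasing_by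
  have := List.sizeOf_lt_of_mem t.2
  simp at *; omega

/-- Simultaneous substitution on terms. -/
def subst (σ : ℕ → Term) : Term → Term
  | .var n => σ n
  | .func f ts => .func f (ts.attach.map fun t => subst σ t.1)
decreasing_by
  have := List.sizeOf_lt_of_mem t.2
  simp at *; omega

/-- The variable at the head of a term (junk value `0` for non-variables). -/
def asVar : Term → ℕ
  | .var n => n
  | _ => 0

end Term

/-- The substitution replacing the single variable `x` by the term `t`. -/
def subst1 (x : ℕ) (t : Term) : ℕ → Term := fun n => if n = x then t else .var n

/-- First-order formulas in negation normal form. -/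
inductive Formula : Type where
  | pos : ℕ → List Term → Formula
  | neg : ℕ → List Term → Formula
  | and : Formula → Formula → Formula
  | or  : Formula → Formula → Formula
  | all : ℕ → Formula → Formula
  | ex  : ℕ → Formula → Formula

namespace Formula

/-- De Morgan dual. -/
def dual : Formula → Formula
  | pos p ts => neg p ts
  | neg p ts => pos p ts
  | and A B => or A.dual B.dual
  | or A B => and A.dual B.dual
  | all x A => ex x A.dual
  | ex x A => all x A.dual

/-- Simultaneous substitution on formulas (binders are kept). -/
def subst (σ : ℕ → Term) : Formula → Formula
  | pos p ts => pos p (ts.map (Term.subst σ))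
  | neg p ts => neg p (ts.map (Term.subst σ))
  | and A B => and (A.subst σ) (B.subst σ)
  | or A B => or (A.subst σ) (B.subst σ)
  | all x A => all x (A.subst σ)
  | ex x A => ex x (A.subst σ)

/-- All variables occurring in a formula (including binders). -/
def varList : Formula → List ℕ
  | pos _ ts => ts.flatMap Term.varList
  | neg _ ts => ts.flatMap Term.varList
  | and A B => A.varList ++ B.varList
  | or A B => A.varList ++ B.varList
  | all x A => x :: A.varList
  | ex x A => x :: A.varList

/-- Free variables of a formula. -/
def fvarList : Formula → List ℕ
  | pos _ ts => ts.flatMap Term.varList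
  | neg _ ts => ts.flatMap Term.varList
  | and A B => A.fvarList ++ B.fvarList
  | or A B => A.fvarList ++ B.fvarList
  | all x A => A.fvarList.filter (· ≠ x)
  | ex x A => A.fvarList.filter (· ≠ x)

/-- Bound variables of a formula. -/
def bvarList : Formula → List ℕ
  | pos _ _ => []
  | neg _ _ => []
  | and A B => A.bvarList ++ B.bvarList
  | or A B => A.bvarList ++ B.bvarList
  | all x A => x :: A.bvarList
  | ex x A => x :: A.bvarList

/-- A literal is an atom or a negated atom. -/
def isLit : Formula → Prop
  | pos _ _ => True
  | neg _ _ => True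
  | _ => False

/-- A formula is positive if its top connective is ∨, ∃ or a positive literal. -/
def Positive : Formula → Prop
  | pos _ _ => True
  | or _ _ => True
  | ex _ _ => True
  | _ => False

/-- Logical complexity of a formula. -/
def size : Formula → ℕ
  | pos _ _ => 0
  | neg _ _ => 0
  | and A B => A.size + B.size + 1
  | or A B => A.size + B.size + 1
  | all _ A => A.size + 1
  | ex _ A => A.size + 1

/-- Boolean evaluation of a (quantifier-free) formula under an assignment of
    truth values to atoms; the quantifier cases are junk. -/
def eval (v : ℕ → List Term → Bool) : Formula → Bool
  | pos p ts => v p ts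
  | neg p ts => ! v p ts
  | and A B => A.eval v && B.eval v
  | or A B => A.eval v || B.eval v
  | all _ A => A.eval v
  | ex _ A => A.eval v

end Formula

/-- A sequent of quantifier-free formulas is a (propositional) tautology. -/
def TautList (Γ : List Formula) : Prop := ∀ v, ∃ A ∈ Γ, A.eval v = true

/-- Expansion trees. -/
inductive ETree : Type where
  | lit : Formula → ETree
  | and : ETree → ETree → ETree
  | or  : ETree → ETree → ETree
  | ex  : ℕ → Formula → List (Term × ETree) → ETree
  | all : ℕ → Formula → ℕ → ETree → ETree

namespace ETree

/-- The shallow formula of an expansion tree. -/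
def sh : ETree → Formula
  | lit L => L
  | and a b => .and a.sh b.sh
  | or a b => .or a.sh b.sh
  | ex x A _ => .ex x A
  | all x A _ _ => .all x A

/-- Disjunction of a list of formulas (junk on the empty list). -/
def bigOr : List Formula → Formula
  | [] => Formula.pos 0 []
  | [A] => A
  | A :: B :: rest => .or A (bigOr (B :: rest))

/-- The deep formula of an expansion tree. -/
def dp : ETree → Formula
  | lit L => L
  | and a b => .and a.dp b.dp
  | or a b => .or a.dp b.dp
  | ex _ _ es => bigOr (es.attach.map fun e => dp e.1.2)
  | all _ _ _ E => E.dp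
decreasing_by
  all_goals try (rcases e with ⟨⟨t1, E1⟩, hmem⟩; have := List.sizeOf_lt_of_mem hmem)
  all_goals simp at *
  all_goals omega

/-- The eigenvariables of the ∀-expansions occurring in an expansion tree. -/
def eigenList : ETree → List ℕ
  | lit _ => []
  | and a b => a.eigenList ++ b.eigenList
  | or a b => a.eigenList ++ b.eigenList
  | ex _ _ es => es.attach.flatMap fun e => eigenList e.1.2
  | all _ _ α E => α :: E.eigenList
decreasing_by
  all_goals try (rcases e with ⟨⟨t1, E1⟩, hmem⟩; have := List.sizeOf_lt_of_mem hmem)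
  all_goals simp at *
  all_goals omega

/-- All variables occurring in an expansion tree. -/
def varList : ETree → List ℕ
  | lit L => L.varList
  | and a b => a.varList ++ b.varList
  | or a b => a.varList ++ b.varList
  | ex x A es => x :: A.varList ++ es.attach.flatMap (fun e => e.1.1.varList ++ varList e.1.2)
  | all x A α E => α :: x :: A.varList ++ E.varList
decreasing_by
  all_goals try (rcases e with ⟨⟨t1, E1⟩, hmem⟩; have := List.sizeOf_lt_of_mem hmem)
  all_goals simp at *
  all_goals omega

/-- Substitution applied to an expansion tree.  On a ∀-expansion the
    eigenvariable is replaced by the (head variable of the) image term. -/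
def subst (σ : ℕ → Term) : ETree → ETree
  | lit L => lit (L.subst σ)
  | and a b => and (a.subst σ) (b.subst σ)
  | or a b => or (a.subst σ) (b.subst σ)
  | ex x A es => ex x (A.subst σ) (es.attach.map fun e => (e.1.1.subst σ, subst σ e.1.2))
  | all x A α E => all x (A.subst σ) ((σ α).asVar) (subst σ E)
decreasing_by
  all_goals try (rcases e with ⟨⟨t1, E1⟩, hmem⟩; have := List.sizeOf_lt_of_mem hmem)
  all_goals simp at *
  all_goals omega

/-- Renaming of variables in an expansion tree. -/
def rename (η : ℕ → ℕ) (E : ETree) : ETree := E.subst fun n => Term.var (η n)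

/-- `α` occurs as the eigenvariable of some ∀-expansion of the tree. -/
def hasEigen (α : ℕ) (E : ETree) : Prop := α ∈ E.eigenList

end ETree

/-- Entries of a branch: formulas and integers. -/
inductive BEntry : Type where
  | fm : Formula → BEntry
  | num : ℕ → BEntry

/-- The branches of an expansion tree: all lists of formulas and branch choices
    encountered on a complete path from the root to a leaf. -/
def ETree.brList : ETree → List (List BEntry)
  | .lit L => [[.fm L]]
  | .and a b =>
      ((a.brList).map fun r => .fm (ETree.and a b).sh :: .num 1 :: r) ++
      ((b.brList).map fun r => .fm (ETree.and a b).sh :: .num 2 :: r)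
  | .or a b =>
      ((a.brList).map fun r => .fm (ETree.or a b).sh :: .num 1 :: r) ++
      ((b.brList).map fun r => .fm (ETree.or a b).sh :: .num 2 :: r)
  | .ex x A es => es.attach.flatMap fun e => (ETree.brList e.1.2).map fun r => .fm (Formula.ex x A) :: r
  | .all x A _ E => (E.brList).map fun r => .fm (Formula.all x A) :: r
decreasing_by
  all_goals try (rcases e with ⟨⟨t1, E1⟩, hmem⟩; have := List.sizeOf_lt_of_mem hmem)
  all_goals simp at *
  all_goals omega

/-- A substitution acts on a branch by acting on its formula entries. -/
def brSubst (σ : ℕ → Term) : List BEntry → List BEntry :=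
  List.map fun e => match e with
    | .fm F => .fm (F.subst σ)
    | .num i => .num i

/-- The subtree relation on expansion trees. -/
inductive Subtree : ETree → ETree → Prop where
  | refl (E : ETree) : Subtree E E
  | and_left {F a b} : Subtree F a → Subtree F (.and a b)
  | and_right {F a b} : Subtree F b → Subtree F (.and a b)
  | or_left {F a b} : Subtree F a → Subtree F (.or a b)
  | or_right {F a b} : Subtree F b → Subtree F (.or a b)
  | ex {F x A es} (e : Term × ETree) : e ∈ es → Subtree F e.2 → Subtree F (.ex x A es)
  | all {F x A α E} : Subtree F E → Subtree F (.all x A α E)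

/-- Well-formedness of an expansion tree (Miller's conditions on shallow formulas). -/
inductive ETree.WF : ETree → Prop where
  | lit {L} : L.isLit → WF (.lit L)
  | and {a b} : WF a → WF b → WF (.and a b)
  | or {a b} : WF a → WF b → WF (.or a b)
  | ex {x A es} : es ≠ [] → (∀ e ∈ es, WF e.2) →
      (∀ e ∈ es, ETree.sh e.2 = A.subst (subst1 x e.1)) → WF (.ex x A es)
  | all {x A α E} : WF E → E.sh = A.subst (subst1 x (.var α)) → WF (.all x A α E)

/-- An item of an expansion proof: an expansion tree or a cut (ordered pair,
    positive tree first). -/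
abbrev EItem : Type := ETree ⊕ ETree × ETree

/-- Sequences of cuts and expansion trees. -/
abbrev EProof : Type := List EItem

namespace EItem

/-- The expansion trees of an item. -/
def trees : EItem → List ETree
  | .inl E => [E]
  | .inr c => [c.1, c.2]

/-- Is the item a cut? -/
def isCut : EItem → Prop
  | .inl _ => False
  | .inr _ => True

/-- Well-formedness of an item: trees are well-formed; a cut is an ordered pair
    of dual well-formed trees, the positive one first. -/
def WF : EItem → Prop
  | .inl E => E.WF
  | .inr c => c.1.WF ∧ c.2.WF ∧ c.2.sh = c.1.sh.dual ∧ c.1.sh.Positive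

/-- `α` occurs as eigenvariable of a ∀-expansion in the item. -/
def hasEigen (α : ℕ) (it : EItem) : Prop := ∃ E ∈ it.trees, α ∈ E.eigenList

/-- Apply a function to all trees of an item. -/
def mapTrees (f : ETree → ETree) : EItem → EItem
  | .inl E => .inl (f E)
  | .inr c => .inr (f c.1, f c.2)

end EItem

/-- The shallow sequent of a sequence: the shallow formulas of its trees. -/
def shSeq (P : EProof) : List Formula :=
  P.filterMap fun it => match it with
    | .inl E => some E.sh
    | .inr _ => none

/-- The deep sequent of a sequence: deep formulas of trees and cuts. -/
def dpSeq (P : EProof) : List Formula :=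
  P.map fun it => match it with
    | .inl E => E.dp
    | .inr c => .and c.1.dp c.2.dp

/-- The branches of an item (union over its trees). -/
def EItem.branches (it : EItem) : Set (List BEntry) :=
  {s | ∃ E ∈ it.trees, s ∈ E.brList}

/-- Weak regularity: two branches exhibiting a ∀-expansion with the same
    eigenvariable have equal prefixes, equal ∀-formulas, and live in members of
    the same kind (both trees or both cuts). -/
def WeakRegular (P : EProof) : Prop :=
  ∀ S ∈ P, ∀ T ∈ P, ∀ (s s' r r' : List BEntry) (x y α : ℕ) (A B : Formula),
    (s ++ [BEntry.fm (.all x A), BEntry.fm (A.subst (subst1 x (.var α)))] ++ s') ∈ S.branches →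
    (r ++ [BEntry.fm (.all y B), BEntry.fm (B.subst (subst1 y (.var α)))] ++ r') ∈ T.branches →
    s = r ∧ Formula.all x A = Formula.all y B ∧ (S.isCut ↔ T.isCut)

/-- A position inside a sequence: index of the item, index of the component
    tree inside the item, and a path in that tree. -/
structure TPos : Type where
  item : ℕ
  comp : ℕ
  path : List ℕ

/-- The subtree of an expansion tree at a given path. -/
def ETree.atPath : ETree → List ℕ → Option ETree
  | E, [] => some E
  | .and a _, 0 :: p => a.atPath p
  | .and _ b, 1 :: p => b.atPath p
  | .or a _, 0 :: p => a.atPath p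
  | .or _ b, 1 :: p => b.atPath p
  | .ex _ _ es, k :: p =>
      match es[k]? with
      | some e => e.2.atPath p
      | none => none
  | .all _ _ _ E, 0 :: p => E.atPath p
  | _, _ => none

/-- The subtree of a sequence at a given position. -/
def treeAt (P : EProof) (q : TPos) : Option ETree :=
  match P[q.item]? with
  | some it =>
      match (EItem.trees it)[q.comp]? with
      | some E => E.atPath q.path
      | none => none
  | none => none

/-- Occurrences of expansions and cuts in a sequence. -/
inductive Occ : Type where
  | cut : ℕ → Occ
  | allO : TPos → Occ
  | exO : TPos → ℕ → Occ

/-- The occurrence is an expansion (not a cut). -/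
def Occ.isExpansion : Occ → Prop
  | .cut _ => False
  | _ => True

/-- Position data of an expansion occurrence. -/
def Occ.pos : Occ → Option TPos
  | .cut _ => none
  | .allO p => some p
  | .exO p _ => some p

/-- `i` is the index of a cut in `P`. -/
def IsCutIdx (P : EProof) (i : ℕ) : Prop := ∃ c : ETree × ETree, P[i]? = some (Sum.inr c)

/-- There is a ∀-expansion with eigenvariable `α` at position `q`. -/
def AllEigen (P : EProof) (q : TPos) (α : ℕ) : Prop :=
  ∃ x A E, treeAt P q = some (.all x A α E)

/-- Validity of an occurrence. -/
def ValidOcc (P : EProof) : Occ → Prop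
  | .cut i => IsCutIdx P i
  | .allO q => ∃ x A α E, treeAt P q = some (.all x A α E)
  | .exO q k => ∃ x A es, treeAt P q = some (.ex x A es) ∧ k < es.length

/-- The term of the `k`-th ∃-expansion at position `q` is `t`. -/
def ExTerm (P : EProof) (q : TPos) (k : ℕ) (t : Term) : Prop :=
  ∃ x A es e, treeAt P q = some (.ex x A es) ∧ es[k]? = some e ∧ e.1 = t

/-- The scope of an expansion occurrence: item, component and path prefix of
    everything it dominates. -/
def Occ.scope : Occ → Option (ℕ × ℕ × List ℕ)
  | .cut _ => none
  | .allO p => some (p.item, p.comp, p.path ++ [0])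
  | .exO p k => some (p.item, p.comp, p.path ++ [k])

/-- The expansion `v` dominates the expansion `w`. -/
def Dominates (P : EProof) (v w : Occ) : Prop :=
  ValidOcc P v ∧ ValidOcc P w ∧
    ∃ i c q pw r, v.scope = some (i, c, q) ∧ w.pos = some pw ∧
      pw.item = i ∧ pw.comp = c ∧ pw.path = q ++ r

/-- The immediate dependency relation `<⁰` between occurrences. -/
def Dep0 (P : EProof) (v w : Occ) : Prop :=
  ValidOcc P v ∧ ValidOcc P w ∧
    ((∃ p α, v = .allO p ∧ AllEigen P p α ∧
        ∃ q k t, w = .exO q k ∧ ExTerm P q k t ∧ α ∈ t.varList) ∨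
     Dominates P v w ∨
     (∃ i, v = .cut i ∧ ∃ q, w.pos = some q ∧ q.item = i) ∨
     (∃ p α i c, v = .allO p ∧ AllEigen P p α ∧ w = .cut i ∧
        P[i]? = some (Sum.inr c) ∧ α ∈ (c.1).sh.varList))

/-- The dependency relation `<_P`: the transitive closure of `<⁰`. -/
def Dep (P : EProof) : Occ → Occ → Prop := Relation.TransGen (Dep0 P)

/-- Acyclicity of the dependency relation. -/
def DepAcyclic (P : EProof) : Prop := ∀ o, ¬ Dep P o o

/-- The eigenvariable condition: no eigenvariable of a ∀-expansion of `P`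
    occurs in the shallow sequent of `P`. -/
def EigenCond (P : EProof) : Prop :=
  ∀ q α, AllEigen P q α → ∀ F ∈ shSeq P, α ∉ F.varList

/-- Expansion proofs: well-formed, weakly regular, acyclic, valid sequences of
    cuts and expansion trees satisfying the eigenvariable condition. -/
def IsExpansionProof (P : EProof) : Prop :=
  (∀ it ∈ P, EItem.WF it) ∧ WeakRegular P ∧ DepAcyclic P ∧
    TautList (dpSeq P) ∧ EigenCond P

/-- A sequence is cut-free if it contains no cuts. -/
def CutFreeSeq (P : EProof) : Prop := ∀ c : ETree × ETree, Sum.inr c ∉ P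

/-! ### The sequent calculus LK (sequents as multisets) -/

/-- The one-sided sequent calculus LK on multisets of NNF formulas. -/
inductive LK : Multiset Formula → Type where
  | ax (Γ : Multiset Formula) (p : ℕ) (ts : List Term) :
      LK (Formula.pos p ts ::ₘ Formula.neg p ts ::ₘ Γ)
  | andR {Γ : Multiset Formula} {A B : Formula} :
      LK (A ::ₘ Γ) → LK (B ::ₘ Γ) → LK (Formula.and A B ::ₘ Γ)
  | orR {Γ : Multiset Formula} {A B : Formula} :
      LK (A ::ₘ B ::ₘ Γ) → LK (Formula.or A B ::ₘ Γ)
  | allR {Γ : Multiset Formula} (x : ℕ) (A : Formula) (α : ℕ)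
      (hα : ∀ F ∈ Formula.all x A ::ₘ Γ, α ∉ Formula.varList F) :
      LK (A.subst (subst1 x (.var α)) ::ₘ Γ) → LK (Formula.all x A ::ₘ Γ)
  | exR {Γ : Multiset Formula} (x : ℕ) (A : Formula) (t : Term)
      (ht : ∀ v ∈ t.varList, v ∉ A.bvarList) :
      LK (A.subst (subst1 x t) ::ₘ Formula.ex x A ::ₘ Γ) → LK (Formula.ex x A ::ₘ Γ)
  | cut {Γ : Multiset Formula} (A : Formula) :
      LK (A ::ₘ Γ) → LK (A.dual ::ₘ Γ) → LK Γ

namespace LK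

/-- The eigenvariables of the ∀-inferences of an LK-proof. -/
def eigenList : {Γ : Multiset Formula} → LK Γ → List ℕ
  | _, .ax _ _ _ => []
  | _, .andR p q => p.eigenList ++ q.eigenList
  | _, .orR p => p.eigenList
  | _, .allR _ _ α _ p => α :: p.eigenList
  | _, .exR _ _ _ _ p => p.eigenList
  | _, .cut _ p q => p.eigenList ++ q.eigenList

/-- Cut-freeness of an LK-proof. -/
def cutFree : {Γ : Multiset Formula} → LK Γ → Prop
  | _, .ax _ _ _ => True
  | _, .andR p q => p.cutFree ∧ q.cutFree
  | _, .orR p => p.cutFree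
  | _, .allR _ _ _ _ p => p.cutFree
  | _, .exR _ _ _ _ p => p.cutFree
  | _, .cut _ _ _ => False

/-- Regularity: the eigenvariables of distinct ∀-inferences are pairwise
    distinct and different from the free variables of the conclusion. -/
def Regular {Γ : Multiset Formula} (π : LK Γ) : Prop :=
  π.eigenList.Nodup ∧ ∀ α ∈ π.eigenList, ∀ F ∈ Γ, α ∉ Formula.fvarList F

end LK

/-- The natural coercion of a formula into an expansion tree (∃-quantifiers are
    expanded with their own variable, ∀-quantifiers with an eigenvariable). -/
def Formula.toETree : Formula → ETree
  | .pos p ts => .lit (.pos p ts)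
  | .neg p ts => .lit (.neg p ts)
  | .and A B => .and A.toETree B.toETree
  | .or A B => .or A.toETree B.toETree
  | .ex x A => .ex x A [(.var x, A.toETree)]
  | .all x A => .all x A x A.toETree

/-- The translation `Exp` from LK-proofs to sequences of cuts and expansion
    trees (as a relation, since sequences are identified up to permutation). -/
inductive ExpOf : {Γ : Multiset Formula} → LK Γ → EProof → Prop where
  | ax (Γ : Multiset Formula) (p : ℕ) (ts : List Term) :
      ExpOf (LK.ax Γ p ts)
        ((Γ.toList.map fun F => Sum.inl F.toETree) ++
          [Sum.inl (.lit (.pos p ts)), Sum.inl (.lit (.neg p ts))])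
  | andR {Γ A B} {πA : LK (A ::ₘ Γ)} {πB : LK (B ::ₘ Γ)} {PA PB : EProof} {EA EB : ETree} :
      ExpOf πA (PA ++ [Sum.inl EA]) → EA.sh = A →
      ExpOf πB (PB ++ [Sum.inl EB]) → EB.sh = B →
      ExpOf (LK.andR πA πB) (PA ++ PB ++ [Sum.inl (.and EA EB)])
  | orR {Γ A B} {π : LK (A ::ₘ B ::ₘ Γ)} {P : EProof} {EA EB : ETree} :
      ExpOf π (P ++ [Sum.inl EA, Sum.inl EB]) → EA.sh = A → EB.sh = B →
      ExpOf (LK.orR π) (P ++ [Sum.inl (.or EA EB)])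
  | allR {Γ} {x : ℕ} {A : Formula} {α : ℕ} {hα}
      {π : LK (A.subst (subst1 x (.var α)) ::ₘ Γ)} {P : EProof} {E : ETree} :
      ExpOf π (P ++ [Sum.inl E]) → E.sh = A.subst (subst1 x (.var α)) →
      ExpOf (LK.allR x A α hα π) (P ++ [Sum.inl (.all x A α E)])
  | exR {Γ} {x : ℕ} {A : Formula} {t : Term} {ht}
      {π : LK (A.subst (subst1 x t) ::ₘ Formula.ex x A ::ₘ Γ)}
      {P : EProof} {es : List (Term × ETree)} {Et : ETree} :
      ExpOf π (P ++ [Sum.inl (.ex x A es), Sum.inl Et]) →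
      Et.sh = A.subst (subst1 x t) →
      ExpOf (LK.exR x A t ht π) (P ++ [Sum.inl (.ex x A (es ++ [(t, Et)]))])
  | cut {Γ} {A : Formula} (hA : A.Positive)
      {πp : LK (A ::ₘ Γ)} {πn : LK (A.dual ::ₘ Γ)}
      {Pp Pn : EProof} {Ep En : ETree} :
      ExpOf πp (Pp ++ [Sum.inl Ep]) → Ep.sh = A →
      ExpOf πn (Pn ++ [Sum.inl En]) → En.sh = A.dual →
      ExpOf (LK.cut A πp πn) (Sum.inr (Ep, En) :: (Pp ++ Pn))

/-! ### The calculus LKE on sequences of expansion trees and cuts -/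

/-- The calculus LKE, working on sequences of expansion trees and cuts
    (identified up to permutation). -/
inductive LKE : EProof → Prop where
  | ax (P : EProof) (p : ℕ) (ts : List Term) :
      LKE (P ++ [Sum.inl (.lit (.pos p ts)), Sum.inl (.lit (.neg p ts))])
  | allR (P : EProof) (x : ℕ) (A : Formula) (α : ℕ) (Es : List ETree)
      (hα : α ∉ (Formula.all x A).varList ∧ ∀ F ∈ shSeq P, α ∉ F.varList) :
      LKE (P ++ Es.map Sum.inl) →
      LKE (P ++ Es.map fun E => Sum.inl (.all x A α E))
  | exMove (P : EProof) (x : ℕ) (A : Formula)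
      (es₁ es₂ : List (Term × ETree)) (e : Term × ETree) :
      LKE (P ++ [Sum.inl (.ex x A (es₁ ++ es₂ ++ [e]))]) →
      LKE (P ++ [Sum.inl (.ex x A (es₁ ++ e :: es₂))])
  | exAbsorb (P : EProof) (x : ℕ) (A : Formula) (t : Term)
      (L : List (List (Term × ETree) × List ETree)) :
      LKE (P ++ L.map (fun q => Sum.inl (ETree.ex x A q.1)) ++
            (L.flatMap fun q => q.2.map Sum.inl)) →
      LKE (P ++ L.map fun q => Sum.inl (ETree.ex x A (q.1 ++ q.2.map fun E => (t, E))))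
  | andR (P : EProof) (E1 E2 : ETree) :
      LKE (P ++ [Sum.inl E1]) → LKE (P ++ [Sum.inl E2]) →
      LKE (P ++ [Sum.inl (.and E1 E2)])
  | orR (P : EProof) (E1 E2 : ETree) :
      LKE (P ++ [Sum.inl E1, Sum.inl E2]) → LKE (P ++ [Sum.inl (.or E1 E2)])
  | cut (P : EProof) (Es Fs : List ETree) (hlen : Es.length = Fs.length)
      (hsh : ∀ E ∈ Es, ∀ E' ∈ Es, ETree.sh E = ETree.sh E') :
      LKE (P ++ Es.map Sum.inl) → LKE (P ++ Fs.map Sum.inl) →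
      LKE (P ++ (Es.zip Fs).map fun c => Sum.inr c)
  | perm (P Q : EProof) : LKE P → P.Perm Q → LKE Q

/-! ### The sequent calculus LK on sequents-as-sets, with a cut flag -/

/-- The one-sided sequent calculus LK on sets of NNF formulas; the Boolean flag
    records whether the cut rule may be used. -/
inductive LKS : Bool → Set Formula → Prop where
  | ax (c : Bool) (Γ : Set Formula) (p : ℕ) (ts : List Term) :
      LKS c (insert (Formula.pos p ts) (insert (Formula.neg p ts) Γ))
  | andR {c : Bool} {Γ : Set Formula} {A B : Formula} :
      LKS c (insert A Γ) → LKS c (insert B Γ) → LKS c (insert (Formula.and A B) Γ)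
  | orR {c : Bool} {Γ : Set Formula} {A B : Formula} :
      LKS c (insert A (insert B Γ)) → LKS c (insert (Formula.or A B) Γ)
  | allR {c : Bool} {Γ : Set Formula} (x : ℕ) (A : Formula) (α : ℕ)
      (hα : ∀ F ∈ insert (Formula.all x A) Γ, α ∉ Formula.varList F) :
      LKS c (insert (A.subst (subst1 x (.var α))) Γ) →
      LKS c (insert (Formula.all x A) Γ)
  | exR {c : Bool} {Γ : Set Formula} (x : ℕ) (A : Formula) (t : Term)
      (ht : ∀ v ∈ t.varList, v ∉ A.bvarList) :
      LKS c (insert (A.subst (subst1 x t)) (insert (Formula.ex x A) Γ)) →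
      LKS c (insert (Formula.ex x A) Γ)
  | cut {Γ : Set Formula} (A : Formula) :
      LKS true (insert A Γ) → LKS true (insert A.dual Γ) → LKS true Γ

/-! ### Cut-reduction -/

/-- The substitution `[t/α₁,…,t/α_q]` of a quantifier reduction step. -/
def cutSubst (αs : List ℕ) (t : Term) : ℕ → Term :=
  fun n => if n ∈ αs then t else .var n

/-- All trees occurring in a sequence. -/
def EProof.allTrees (P : EProof) : List ETree := P.flatMap EItem.trees

/-- The quantifier-step redex determined by the data `x`, `A`,
    `cuts = [(es₁,α₁,F₁),…,(es_q,α_q,F_q)]` and the remainder `P`: the sequence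
    of cuts `{∃xA +^{es_j}, ∀x Ā +^{α_j} F_j}` followed by `P`. -/
def QuantRedex (x : ℕ) (A : Formula)
    (cuts : List (List (Term × ETree) × ℕ × ETree)) (P : EProof) : EProof :=
  (cuts.map fun c => Sum.inr (ETree.ex x A c.1, ETree.all x A.dual c.2.1 c.2.2)) ++ P

/-- The result of the quantifier reduction step: all cuts `{E_i, F_j η_i σ_i}`
    together with `P, Pη₁σ₁, …, Pη_lσ_l`. -/
def QuantResult (x : ℕ) (A : Formula)
    (cuts : List (List (Term × ETree) × ℕ × ETree)) (P : EProof)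
    (η : ℕ → ℕ → ℕ) : EProof :=
  let tes := cuts.flatMap fun c => c.1
  let αs := cuts.map fun c => c.2.1
  let Fs := cuts.map fun c => c.2.2
  ((tes.zipIdx.map Prod.swap).flatMap fun ie =>
      Fs.map fun F => Sum.inr (ie.2.2, (F.rename (η ie.1)).subst (cutSubst αs ie.2.1)))
    ++ P
    ++ ((tes.zipIdx.map Prod.swap).flatMap fun ie =>
          P.map (EItem.mapTrees fun G => (G.rename (η ie.1)).subst (cutSubst αs ie.2.1)))

/-- The eigenvariables `β` of the redex `P₁` lying above an occurrence of one of
    the `+^{α_i}` in the dependency order. -/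
def QuantDom (P₁ : EProof) (αs : List ℕ) : Set ℕ :=
  {β | ∃ αi ∈ αs, ∃ o o' : TPos,
     AllEigen P₁ o αi ∧ AllEigen P₁ o' β ∧ Dep P₁ (Occ.allO o) (Occ.allO o')}

/-- `η i` is, for each `i < l`, a renaming to fresh variables of the
    eigenvariables in `D`. -/
def FreshRenamings (P₁ : EProof) (D : Set ℕ) (l : ℕ) (η : ℕ → ℕ → ℕ) : Prop :=
  (∀ i β, β ∉ D → η i β = β) ∧
  (∀ i < l, ∀ β ∈ D, ∀ E ∈ P₁.allTrees, η i β ∉ E.varList) ∧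
  (∀ i < l, ∀ i' < l, ∀ β ∈ D, ∀ β' ∈ D, η i β = η i' β' → i = i' ∧ β = β')

/-- The basic cut-reduction steps (on sequences in a fixed order). -/
inductive Red0 : EProof → EProof → Prop where
  | atomic (p : ℕ) (ts : List Term) (P : EProof) :
      Red0 (Sum.inr (ETree.lit (.pos p ts), ETree.lit (.neg p ts)) :: P) P
  | prop (S : Formula) (Q : List (ETree × ETree × ETree × ETree)) (P : EProof)
      (hQ : Q ≠ [])
      (hsh : ∀ q ∈ Q, (ETree.or q.1 q.2.1).sh = S)
      (hP : ∀ c : ETree × ETree, Sum.inr c ∈ P → c.1.sh ≠ S) :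
      Red0 ((Q.map fun q => Sum.inr (ETree.or q.1 q.2.1, ETree.and q.2.2.1 q.2.2.2)) ++ P)
           ((Q.flatMap fun q => [Sum.inr (q.1, q.2.2.1), Sum.inr (q.2.1, q.2.2.2)]) ++ P)
  | quant (x : ℕ) (A : Formula)
      (cuts : List (List (Term × ETree) × ℕ × ETree)) (P : EProof) (η : ℕ → ℕ → ℕ)
      (hc : cuts ≠ []) (hne : ∀ c ∈ cuts, c.1 ≠ [])
      (hα : ∀ c ∈ cuts, ∀ it ∈ P, ¬ EItem.hasEigen c.2.1 it)
      (hPex : ∀ d : ETree × ETree, Sum.inr d ∈ P →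
        d.1.sh ≠ Formula.ex x A ∧ d.2.sh ≠ Formula.ex x A)
      (hη : FreshRenamings (QuantRedex x A cuts P)
              (QuantDom (QuantRedex x A cuts P) (cuts.map fun c => c.2.1))
              (cuts.flatMap fun c => c.1).length η) :
      Red0 (QuantRedex x A cuts P) (QuantResult x A cuts P η)

/-- The cut-reduction relation `↦` on sequences identified up to permutation. -/
def Red (P Q : EProof) : Prop :=
  ∃ P' Q', P.Perm P' ∧ Red0 P' Q' ∧ Q'.Perm Q

/-! ### Equivalence classes of cuts -/

/-- Two cuts are similar if they are quantified cuts with the same shallow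
    formula `∃x A`. -/
def CutSim : ETree × ETree → ETree × ETree → Prop := fun c d =>
  ∃ x A es α F es' α' F',
    c = (ETree.ex x A es, ETree.all x A.dual α F) ∧
    d = (ETree.ex x A es', ETree.all x A.dual α' F')

/-- The positions `i` and `j` carry cuts of `P` lying in the same
    ∼-equivalence class (the reflexive closure of `CutSim` on cut positions). -/
def SimIdx (P : EProof) (i j : ℕ) : Prop :=
  (i = j ∧ IsCutIdx P i) ∨
  (∃ c d, P[i]? = some (Sum.inr c) ∧ P[j]? = some (Sum.inr d) ∧ CutSim c d)

/-- The relation `≺` on ∼-equivalence classes of cuts, expressed on positions: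
    (class of `i`) ≺ (class of `j`) iff some member of the class of `i` is
    `<_P`-below every member of the class of `j`. -/
def ClassLt (P : EProof) (i j : ℕ) : Prop :=
  ∃ i', SimIdx P i' i ∧ ∀ j', SimIdx P j' j → Dep P (Occ.cut i') (Occ.cut j')

/-- The cut at position `i` has rank `r`. -/
def RkIdx (P : EProof) (i : ℕ) (r : ℕ) : Prop :=
  ∃ c : ETree × ETree, P[i]? = some (Sum.inr c) ∧ (c.1).sh.size = r

/-- The cut at position `i` is maximal: no cut has bigger rank, and no cut of
    the same rank is above it in the dependency order. -/
def MaximalCutIdx (P : EProof) (i : ℕ) : Prop :=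
  IsCutIdx P i ∧ ∀ j r r', RkIdx P i r → RkIdx P j r' →
    r' ≤ r ∧ (r' = r → ¬ Dep P (Occ.cut i) (Occ.cut j))

/-- A substitution may be applied to an expansion tree only if it maps each of
    its eigenvariables to a variable. -/
def SubstOK (σ : ℕ → Term) (E : ETree) : Prop :=
  ∀ α ∈ E.eigenList, ∃ n, σ α = Term.var n

/-! Fix a valuation and follow the translation rule by rule: either a side formula of some premise
is already true, or the principal trees of the premises are, and then so is the tree built from
them; for a cut this is the conjunction `Dp(E⁺) ∧ Dp(E⁻)` that the cut contributes. -/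

@[simp]
lemma dpSeq_append (P Q : EProof) : dpSeq (P ++ Q) = dpSeq P ++ dpSeq Q :=
  List.map_append

@[simp]
lemma dpSeq_nil : dpSeq [] = [] := rfl

@[simp]
lemma dpSeq_cons_inl (E : ETree) (P : EProof) : dpSeq (.inl E :: P) = E.dp :: dpSeq P := rfl

@[simp]
lemma dpSeq_cons_inr (c : ETree × ETree) (P : EProof) :
    dpSeq (.inr c :: P) = .and c.1.dp c.2.dp :: dpSeq P := rfl

lemma ETree.eval_bigOr (v : ℕ → List Term → Bool) :
    ∀ l : List Formula, l ≠ [] → (bigOr l).eval v = l.any (Formula.eval v)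
  | [A], _ => by simp [bigOr]
  | A :: B :: rest, _ => by
      simp [bigOr, Formula.eval, eval_bigOr v (B :: rest) (List.cons_ne_nil _ _)]

lemma ETree.dp_ex (x : ℕ) (A : Formula) (es : List (Term × ETree)) :
    (ex x A es).dp = bigOr (es.map fun e => e.2.dp) := by
  rw [dp, List.attach_map_val (f := fun e : Term × ETree => e.2.dp)]

/-- `bigOr []` is a junk atom, so appending an instance to an ∃-expansion only acts as a
disjunction when there already is one. -/
lemma ETree.eval_dp_ex_append (v : ℕ → List Term → Bool) (x : ℕ) (A : Formula)
    {es : List (Term × ETree)} (hes : es ≠ []) (t : Term) (Et : ETree) :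
    (ex x A (es ++ [(t, Et)])).dp.eval v = ((ex x A es).dp.eval v || Et.dp.eval v) := by
  rw [dp_ex, dp_ex, eval_bigOr v _ (by simp), eval_bigOr v _ (by simpa using hes)]
  simp

lemma ExpOf.ex_ne_nil {Γ : Multiset Formula} {π : LK Γ} {Q : EProof} (hQ : ExpOf π Q)
    {x : ℕ} {A : Formula} {es : List (Term × ETree)} (h : Sum.inl (ETree.ex x A es) ∈ Q) :
    es ≠ [] := by
  induction hQ generalizing es with
  | ax =>
    simp only [List.mem_append, List.mem_map] at h
    rcases h with ⟨F, -, hF⟩ | h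
    · cases F <;> simp only [Formula.toETree, Sum.inl.injEq, reduceCtorEq, ETree.ex.injEq] at hF
      obtain ⟨-, -, rfl⟩ := hF
      exact List.cons_ne_nil _ _
    · simp at h
  | exR _ _ ih =>
    simp only [List.mem_append, List.mem_singleton, Sum.inl.injEq, ETree.ex.injEq] at h
    rcases h with h | ⟨-, -, rfl⟩
    · exact ih (by simp [h])
    · simp
  | _ => aesop

lemma ExpOf.any_eval_dpSeq {Γ : Multiset Formula} {π : LK Γ} {Q : EProof} (hQ : ExpOf π Q)
    (v : ℕ → List Term → Bool) : (dpSeq Q).any (Formula.eval v) = true := by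
  induction hQ with
  | ax _ p ts => cases v p ts <;> simp [ETree.dp, Formula.eval]
  | @exR _ x A _ _ _ _ es _ hprem _ ih =>
    have hes : es ≠ [] := hprem.ex_ne_nil (List.mem_append_right _ List.mem_cons_self)
    simp only [dpSeq_append, dpSeq_cons_inl, dpSeq_nil, List.any_append, List.any_cons,
      List.any_nil, Bool.or_false, ETree.eval_dp_ex_append v x A hes, Bool.or_eq_true] at ih ⊢
    tauto
  | _ =>
    simp only [dpSeq_append, dpSeq_cons_inl, dpSeq_cons_inr, dpSeq_nil, List.any_append,
      List.any_cons, List.any_nil, Bool.or_false, ETree.dp, Formula.eval, Bool.or_eq_true,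
      Bool.and_eq_true] at *
    tauto

theorem dp_exp_taut_general {Γ : Multiset Formula} (π : LK Γ)
    (Q : EProof) (hQ : ExpOf π Q) :
    TautList (dpSeq Q) := fun v => List.any_eq_true.mp (hQ.any_eval_dpSeq v)

/-- for every regular LK-proof `π`, the deep sequent
    `Dp(Exp(π))` is a propositional tautology. -/
theorem dp_exp_taut {Γ : Multiset Formula} (π : LK Γ) (hreg : π.Regular)
    (Q : EProof) (hQ : ExpOf π Q) :
    TautList (dpSeq Q) :=
  dp_exp_taut_general π Q hQ
end

section
/- Let P be an expansion proof containing a cut C = {E, ∀xA +^α F}. Then every tree or cut occurrence S in P in which the ∀-expansion +^α occurs is a cut of the form {E', ∀xA +^α F'}. -/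
/-! Weak regularity compares a branch of the cut through its root `+^α` with a
branch of `S` through an occurrence of `+^α`: the prefixes must agree, so the latter
is empty and `+^α` is the root of a tree of `S`; the ∀-formulas agree; and `S` is a
cut.  Since the positive side of a cut is not a ∀-formula, `+^α` is its negative side. -/

namespace ETree.WF

theorem exists_sh_cons_mem_brList {G : ETree} (h : G.WF) :
    ∃ r, BEntry.fm G.sh :: r ∈ G.brList := by
  induction h with
  | @lit L _ => exact ⟨[], by simp [ETree.brList, ETree.sh]⟩
  | @and a b _ _ iha _ | @or a b _ _ iha _ =>
      obtain ⟨r, hr⟩ := iha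
      exact ⟨_, by rw [ETree.brList]; exact List.mem_append_left _ (List.mem_map_of_mem hr)⟩
  | @ex x A es hne _ _ ih =>
      obtain ⟨e, he⟩ := List.exists_mem_of_ne_nil _ hne
      obtain ⟨r, hr⟩ := ih e he
      exact ⟨_, by
        rw [ETree.brList]
        exact List.mem_flatMap.mpr ⟨⟨e, he⟩, List.mem_attach _ _, List.mem_map_of_mem hr⟩⟩
  | @all x A α F _ _ ih =>
      obtain ⟨r, hr⟩ := ih
      exact ⟨_, by rw [ETree.brList]; exact List.mem_map_of_mem hr⟩

theorem exists_all_mem_brList {x : ℕ} {A : Formula} {α : ℕ} {F : ETree}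
    (h : (ETree.all x A α F).WF) :
    ∃ r, BEntry.fm (.all x A) :: BEntry.fm (A.subst (subst1 x (.var α))) :: r ∈
      (ETree.all x A α F).brList := by
  cases h with
  | all hF hsh =>
      obtain ⟨r, hr⟩ := hF.exists_sh_cons_mem_brList
      exact ⟨r, by rw [ETree.brList]; exact List.mem_map.mpr ⟨_, hr, by rw [hsh]⟩⟩

/-- Branches do not record eigenvariables, so the root case has to be reported
    separately: an empty prefix means the ∀-expansion `+^α` is the root. -/
theorem exists_eigen_branch {G : ETree} (h : G.WF) {α : ℕ} (hα : α ∈ G.eigenList) :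
    ∃ s s' y B,
      s ++ [BEntry.fm (.all y B), BEntry.fm (B.subst (subst1 y (.var α)))] ++ s' ∈ G.brList ∧
      (s = [] → ∃ F, G = .all y B α F) := by
  induction h with
  | lit _ => simp [ETree.eigenList] at hα
  | @and a b _ _ iha ihb | @or a b _ _ iha ihb =>
      rw [ETree.eigenList, List.mem_append] at hα
      rcases hα with hα | hα
      · obtain ⟨s, s', y, B, hs, -⟩ := iha hα
        exact ⟨_ :: .num 1 :: s, s', y, B,
          by rw [ETree.brList]; exact List.mem_append_left _ (List.mem_map_of_mem hs), by simp⟩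
      · obtain ⟨s, s', y, B, hs, -⟩ := ihb hα
        exact ⟨_ :: .num 2 :: s, s', y, B,
          by rw [ETree.brList]; exact List.mem_append_right _ (List.mem_map_of_mem hs), by simp⟩
  | @ex x A es _ _ _ ih =>
      simp only [ETree.eigenList, List.mem_flatMap, List.mem_attach, true_and,
        Subtype.exists] at hα
      obtain ⟨e, he, hα⟩ := hα
      obtain ⟨s, s', y, B, hs, -⟩ := ih e he hα
      refine ⟨.fm (.ex x A) :: s, s', y, B, ?_, by simp⟩
      rw [ETree.brList]
      exact List.mem_flatMap.mpr ⟨⟨e, he⟩, List.mem_attach _ _, List.mem_map_of_mem hs⟩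
  | @all x A β F hF hsh ih =>
      rw [ETree.eigenList, List.mem_cons] at hα
      rcases hα with rfl | hα
      · obtain ⟨r, hr⟩ := (ETree.WF.all hF hsh).exists_all_mem_brList
        exact ⟨[], r, x, A, hr, fun _ => ⟨F, rfl⟩⟩
      · obtain ⟨s, s', y, B, hs, -⟩ := ih hα
        refine ⟨.fm (.all x A) :: s, s', y, B, ?_, by simp⟩
        rw [ETree.brList]; exact List.mem_map_of_mem hs

end ETree.WF

namespace EItem.WF

theorem of_mem_trees {S : EItem} (hS : S.WF) {G : ETree} (hG : G ∈ S.trees) : G.WF := by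
  cases S with
  | inl E => simp only [EItem.trees, List.mem_singleton] at hG; exact hG ▸ hS
  | inr c =>
      simp only [EItem.trees, List.mem_cons, List.not_mem_nil, or_false] at hG
      rcases hG with rfl | rfl
      exacts [hS.1, hS.2.1]

theorem snd_eq_of_all_mem_trees {c : ETree × ETree} (hc : EItem.WF (.inr c)) {y : ℕ}
    {B : Formula} {β : ℕ} {F : ETree} (hG : .all y B β F ∈ EItem.trees (.inr c)) :
    c.2 = .all y B β F := by
  simp only [EItem.trees, List.mem_cons, List.not_mem_nil, or_false] at hG
  rcases hG with hG | hG
  · have hpos := hc.2.2.2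
    rw [← hG] at hpos
    exact hpos.elim
  · exact hG.symm

end EItem.WF

/-- if an expansion proof `P` contains a cut
    `{E, ∀xA +^α F}`, then every member of `P` in which the ∀-expansion `+^α`
    occurs is a cut of the form `{E', ∀xA +^α F'}`. -/
theorem eigen_forces_cut (P : EProof) (hP : IsExpansionProof P)
    (E F : ETree) (x : ℕ) (A : Formula) (α : ℕ)
    (hC : Sum.inr (E, ETree.all x A α F) ∈ P) :
    ∀ S ∈ P, EItem.hasEigen α S →
      ∃ E' F', S = Sum.inr (E', ETree.all x A α F') := by
  obtain ⟨hWF, hWR, -⟩ := hP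
  rintro S hS ⟨G, hG, hα⟩
  obtain ⟨s, s', y, B, hbS, hroot⟩ := ((hWF S hS).of_mem_trees hG).exists_eigen_branch hα
  obtain ⟨r, hbC⟩ := (hWF _ hC).2.1.exists_all_mem_brList
  obtain ⟨rfl, hxy, hcut⟩ :=
    hWR _ hC S hS [] r s s' x y α A B ⟨_, by simp [EItem.trees], hbC⟩ ⟨G, hG, hbS⟩
  obtain ⟨rfl, rfl⟩ := Formula.all.inj hxy
  obtain ⟨F', rfl⟩ := hroot rfl
  cases S with
  | inl _ => exact (hcut.mp trivial).elim
  | inr c => exact ⟨c.1, F', by rw [← (hWF _ hS).snd_eq_of_all_mem_trees hG]⟩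
end

section
/- Let P = ∀xA+^αF1,…,∀xA+^αFn, P' be an expansion proof in which the displayed top-level ∀-expansion +^α is <_P-minimal and +^α does not occur in P'. Then F1,…,Fn,P' is an expansion proof. -/
/-!
Stripping `∀xA +^α` from `F₁, …, Fₙ` leaves the deep sequent unchanged, and moving the
positions inside the first `n` members one step down (`Occ.unstrip`) embeds the occurrences of
the new sequence into those of `P` so that `<⁰` is preserved; hence validity and acyclicity
transfer. The new shallow formulas `A[x:=α]` contain only `α` and variables of `∀xA`, and `α`
is an eigenvariable neither of `P'` nor, by weak regularity, of the `Fᵢ`, so the eigenvariable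
condition survives.

Weak regularity could only fail between a branch of some `Fᵢ` and a branch of `P'` exhibiting
the same eigenvariable `β`. Weak regularity of `P` then forces the member of `P'` to start with
some `∀xA +^γ` with `A[x:=γ] = A[x:=α]`. As `γ ≠ α`, the variable `x` is vacuous in `A`, so
the root of `∀xA +^α Fᵢ` already exhibits `β`, with empty prefix: a contradiction.
-/

theorem Term.mem_varList_subst1 {x α β : ℕ} {t : Term}
    (h : β ∈ (t.subst (subst1 x (.var α))).varList) : β = α ∨ β ∈ t.varList := by
  induction t using Term.subst.induct with
  | case1 n =>
    unfold Term.subst subst1 at h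
    split at h <;> simp_all [Term.varList]
  | case2 f ts ih =>
    rw [Term.subst, Term.varList] at h
    simp only [List.mem_flatMap, List.mem_attach, true_and, Subtype.exists, List.mem_map] at h
    obtain ⟨_, ⟨u, hu, rfl⟩, hβ⟩ := h
    rw [Term.varList]
    simp only [List.mem_flatMap, List.mem_attach, true_and, Subtype.exists]
    exact (ih ⟨u, hu⟩ hβ).imp_right fun h => ⟨u, hu, h⟩

theorem Term.subst_subst1_var_const {x α α' : ℕ} (hne : α ≠ α') {t : Term}
    (h : t.subst (subst1 x (.var α)) = t.subst (subst1 x (.var α'))) (γ : ℕ) :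
    t.subst (subst1 x (.var γ)) = t.subst (subst1 x (.var α)) := by
  induction t using Term.subst.induct with
  | case1 n =>
    simp only [Term.subst, subst1] at h ⊢
    split at h <;> simp_all
  | case2 f ts ih =>
    simp only [Term.subst, Term.func.injEq, true_and, List.map_inj_left] at h ⊢
    exact fun u hu => ih u (h u hu)

theorem Formula.mem_varList_subst1 {x α β : ℕ} {B : Formula}
    (h : β ∈ (B.subst (subst1 x (.var α))).varList) : β = α ∨ β ∈ B.varList := by
  induction B with
  | pos p ts | neg p ts =>
    simp only [Formula.subst, Formula.varList, List.mem_flatMap, List.mem_map] at h ⊢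
    obtain ⟨_, ⟨t, ht, rfl⟩, hβ⟩ := h
    exact (Term.mem_varList_subst1 hβ).imp_right fun h => ⟨t, ht, h⟩
  | and B C ihB ihC | or B C ihB ihC =>
    simp only [Formula.subst, Formula.varList, List.mem_append] at h ⊢
    rcases h with h | h
    · exact (ihB h).imp_right Or.inl
    · exact (ihC h).imp_right Or.inr
  | all y B ih | ex y B ih =>
    simp only [Formula.subst, Formula.varList, List.mem_cons] at h ⊢
    rcases h with h | h
    · exact Or.inr (Or.inl h)
    · exact (ih h).imp_right Or.inr

theorem Formula.subst_subst1_var_const {x α α' : ℕ} (hne : α ≠ α') {B : Formula}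
    (h : B.subst (subst1 x (.var α)) = B.subst (subst1 x (.var α'))) (γ : ℕ) :
    B.subst (subst1 x (.var γ)) = B.subst (subst1 x (.var α)) := by
  induction B with
  | pos p ts | neg p ts =>
    simp only [Formula.subst, Formula.pos.injEq, Formula.neg.injEq, true_and,
      List.map_inj_left] at h ⊢
    exact fun t ht => Term.subst_subst1_var_const hne (h t ht) γ
  | and B C ihB ihC | or B C ihB ihC =>
    simp only [Formula.subst, Formula.and.injEq, Formula.or.injEq] at h ⊢
    exact ⟨ihB h.1, ihC h.2⟩
  | all y B ih | ex y B ih =>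
    simp only [Formula.subst, Formula.all.injEq, Formula.ex.injEq, true_and] at h ⊢
    exact ih h

namespace ETree

theorem brList_all (x : ℕ) (A : Formula) (α : ℕ) (E : ETree) :
    (all x A α E).brList = E.brList.map (BEntry.fm (.all x A) :: ·) := by
  rw [brList]

theorem exists_eq_cons_sh_of_mem_brList {E : ETree} {b : List BEntry} (hb : b ∈ E.brList) :
    ∃ t, b = .fm E.sh :: t := by
  cases E <;> rw [brList] at hb <;>
    simp only [List.mem_singleton, List.mem_append, List.mem_map, List.mem_flatMap,
      List.mem_attach, true_and, Subtype.exists] at hb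
  case lit => exact ⟨[], hb⟩
  case and | or => rcases hb with ⟨r, -, rfl⟩ | ⟨r, -, rfl⟩ <;> exact ⟨_, rfl⟩
  case ex => obtain ⟨_, _, _, _, -, rfl⟩ := hb; exact ⟨_, rfl⟩
  case all => obtain ⟨r, -, rfl⟩ := hb; exact ⟨r, rfl⟩

theorem WF.exists_mem_brList {E : ETree} (hE : E.WF) : ∃ b, b ∈ E.brList := by
  induction hE with
  | lit => exact ⟨_, by rw [brList]; exact List.mem_singleton_self _⟩
  | and _ _ ih _ | or _ _ ih _ =>
    obtain ⟨b, hb⟩ := ih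
    exact ⟨_, by rw [brList]; exact List.mem_append_left _ (List.mem_map_of_mem hb)⟩
  | @ex y B es hne _ _ ih =>
    obtain ⟨e, he⟩ := List.exists_mem_of_ne_nil es hne
    obtain ⟨b, hb⟩ := ih e he
    refine ⟨.fm (.ex y B) :: b, ?_⟩
    rw [brList]
    simp only [List.mem_flatMap, List.mem_map, List.mem_attach, true_and]
    exact ⟨⟨e, he⟩, b, hb, rfl⟩
  | all _ _ ih =>
    obtain ⟨b, hb⟩ := ih
    exact ⟨_, by rw [brList]; exact List.mem_map_of_mem hb⟩

theorem WF.exists_instance_branch {E : ETree} (hE : E.WF) {β : ℕ} (hβ : β ∈ E.eigenList) :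
    ∃ s y B s', s ++ [.fm (.all y B), .fm (B.subst (subst1 y (.var β)))] ++ s' ∈ E.brList := by
  induction hE with
  | lit => simp [eigenList] at hβ
  | @and a c _ _ iha ihc | @or a c _ _ iha ihc =>
    rw [eigenList, List.mem_append] at hβ
    rcases hβ with h | h
    · obtain ⟨s, y, B, s', hs⟩ := iha h
      exact ⟨_ :: .num 1 :: s, y, B, s', by
        rw [brList]; exact List.mem_append_left _ (List.mem_map_of_mem hs)⟩
    · obtain ⟨s, y, B, s', hs⟩ := ihc h
      exact ⟨_ :: .num 2 :: s, y, B, s', by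
        rw [brList]; exact List.mem_append_right _ (List.mem_map_of_mem hs)⟩
  | @ex y₀ B₀ es _ _ _ ih =>
    rw [eigenList] at hβ
    simp only [List.mem_flatMap, List.mem_attach, true_and] at hβ
    obtain ⟨⟨e, he⟩, hβe⟩ := hβ
    obtain ⟨s, y, B, s', hs⟩ := ih e he hβe
    refine ⟨.fm (.ex y₀ B₀) :: s, y, B, s', ?_⟩
    rw [brList]
    simp only [List.mem_flatMap, List.mem_map, List.mem_attach, true_and]
    exact ⟨⟨e, he⟩, _, hs, rfl⟩
  | @all y₀ B₀ γ E₀ hE₀ hsh ih =>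
    rw [eigenList, List.mem_cons] at hβ
    rcases hβ with rfl | hβ
    · obtain ⟨b, hb⟩ := hE₀.exists_mem_brList
      obtain ⟨t, rfl⟩ := exists_eq_cons_sh_of_mem_brList hb
      refine ⟨[], y₀, B₀, t, ?_⟩
      rw [brList_all]
      exact List.mem_map.2 ⟨_, hb, by rw [hsh]; rfl⟩
    · obtain ⟨s, y, B, s', hs⟩ := ih hβ
      exact ⟨.fm (.all y₀ B₀) :: s, y, B, s', by rw [brList_all]; exact List.mem_map_of_mem hs⟩

theorem WF.eq_all_of_cons_mem_brList {E : ETree} (hE : E.WF) {x : ℕ} {A : Formula}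
    {c : List BEntry} (hc : .fm (.all x A) :: c ∈ E.brList) :
    ∃ γ E₀, E = ETree.all x A γ E₀ ∧ E₀.sh = A.subst (subst1 x (.var γ)) ∧ c ∈ E₀.brList := by
  obtain ⟨t, ht⟩ := exists_eq_cons_sh_of_mem_brList hc
  cases hE with
  | @all y B γ E₀ _ hsh =>
    simp only [sh, List.cons.injEq, BEntry.fm.injEq, Formula.all.injEq] at ht
    obtain ⟨⟨rfl, rfl⟩, -⟩ := ht
    rw [brList_all] at hc
    obtain ⟨c', hc', hcc⟩ := List.mem_map.1 hc
    exact ⟨γ, E₀, rfl, hsh, (List.cons.inj hcc).2 ▸ hc'⟩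
  | lit hL =>
    simp only [sh, List.cons.injEq, BEntry.fm.injEq] at ht
    rw [← ht.1] at hL
    exact hL.elim
  | _ => simp [sh] at ht

theorem mem_eigenList_of_atPath {E : ETree} {p : List ℕ} {y : ℕ} {B : Formula} {β : ℕ}
    {E' : ETree} (h : E.atPath p = some (.all y B β E')) : β ∈ E.eigenList := by
  induction p generalizing E with
  | nil =>
    cases h
    simp [eigenList]
  | cons k p ih =>
    cases E with
    | lit => simp [atPath] at h
    | and a b | or a b =>
      rw [eigenList, List.mem_append]
      match k, h with
      | 0, h => exact Or.inl (ih h)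
      | 1, h => exact Or.inr (ih h)
    | ex y₀ B₀ es =>
      rw [atPath] at h
      rw [eigenList]
      simp only [List.mem_flatMap, List.mem_attach, true_and]
      cases hk : es[k]? with
      | none => simp [hk] at h
      | some e =>
        rw [hk] at h
        exact ⟨⟨e, List.mem_of_getElem? hk⟩, ih h⟩
    | all y₀ B₀ γ E₀ =>
      rw [eigenList, List.mem_cons]
      match k, h with
      | 0, h => exact Or.inr (ih h)
      | _ + 1, h => simp [atPath] at h

end ETree

theorem ETree.WF.of_all {x : ℕ} {A : Formula} {α : ℕ} {F : ETree}
    (h : (ETree.all x A α F).WF) : F.WF ∧ F.sh = A.subst (subst1 x (.var α)) := by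
  cases h with
  | all hF hsh => exact ⟨hF, hsh⟩

theorem EItem.mem_branches_inl {E : ETree} {b : List BEntry} :
    b ∈ EItem.branches (.inl E) ↔ b ∈ E.brList := by
  simp [EItem.branches, EItem.trees]

theorem EItem.cons_mem_branches_all {x : ℕ} {A : Formula} {α : ℕ} {F : ETree}
    {b : List BEntry} (hb : b ∈ F.brList) :
    .fm (.all x A) :: b ∈ EItem.branches (.inl (ETree.all x A α F)) := by
  rw [EItem.mem_branches_inl, ETree.brList_all]
  exact List.mem_map_of_mem hb

theorem EItem.WF.of_mem_trees_s12 {it : EItem} (h : it.WF) {E : ETree} (hE : E ∈ it.trees) :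
    E.WF := by
  cases it with
  | inl => simp_all [EItem.trees, EItem.WF]
  | inr c =>
    simp only [EItem.trees, List.mem_cons, List.not_mem_nil, or_false] at hE
    rcases hE with rfl | rfl
    exacts [h.1, h.2.1]

theorem AllEigen.exists_hasEigen {R : EProof} {q : TPos} {β : ℕ} (h : AllEigen R q β) :
    ∃ it ∈ R, it.hasEigen β := by
  obtain ⟨y, B, E, hE⟩ := h
  unfold treeAt at hE
  cases hit : R[q.item]? with
  | none => simp [hit] at hE
  | some it =>
    cases hG : it.trees[q.comp]? with
    | none => simp [hit, hG] at hE
    | some G =>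
      simp only [hit, hG] at hE
      exact ⟨it, List.mem_of_getElem? hit, G, List.mem_of_getElem? hG,
        ETree.mem_eigenList_of_atPath hE⟩

section WeakRegular

variable {P : EProof} {x : ℕ} {A : Formula} {α : ℕ} {F : ETree}

theorem WeakRegular.not_instance_below (hWR : WeakRegular P)
    (hS : Sum.inl (ETree.all x A α F) ∈ P) (hF : F.WF)
    (hsh : F.sh = A.subst (subst1 x (.var α))) {β : ℕ}
    (hβ : A.subst (subst1 x (.var β)) = A.subst (subst1 x (.var α)))
    (s s' : List BEntry) (y : ℕ) (B : Formula) :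
    s ++ [.fm (.all y B), .fm (B.subst (subst1 y (.var β)))] ++ s' ∉ F.brList := by
  intro hs
  obtain ⟨b, hb⟩ := hF.exists_mem_brList
  obtain ⟨t, rfl⟩ := ETree.exists_eq_cons_sh_of_mem_brList hb
  have h₁ : [] ++ [.fm (.all x A), .fm (A.subst (subst1 x (.var β)))] ++ t ∈
      EItem.branches (.inl (ETree.all x A α F)) := by
    rw [EItem.mem_branches_inl, ETree.brList_all, hβ, ← hsh]
    exact List.mem_map_of_mem hb
  have h₂ : (.fm (.all x A) :: s) ++ [.fm (.all y B), .fm (B.subst (subst1 y (.var β)))] ++ s' ∈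
      EItem.branches (.inl (ETree.all x A α F)) :=
    EItem.cons_mem_branches_all hs
  exact List.cons_ne_nil _ _ (hWR _ hS _ hS _ _ _ _ _ _ _ _ _ h₁ h₂).1.symm

theorem WeakRegular.not_mem_eigenList (hWR : WeakRegular P)
    (hS : Sum.inl (ETree.all x A α F) ∈ P) (hF : F.WF)
    (hsh : F.sh = A.subst (subst1 x (.var α))) : α ∉ F.eigenList := fun hα => by
  obtain ⟨s, y, B, s', hs⟩ := hF.exists_instance_branch hα
  exact hWR.not_instance_below hS hF hsh rfl s s' y B hs

theorem WeakRegular.false_of_shared_instance (hWR : WeakRegular P)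
    (hS : Sum.inl (ETree.all x A α F) ∈ P) (hF : F.WF)
    (hsh : F.sh = A.subst (subst1 x (.var α)))
    {T : EItem} (hT : T ∈ P) (hWFT : T.WF) (hαT : ¬ T.hasEigen α)
    {s s' r r' : List BEntry} {y y' β : ℕ} {B B' : Formula}
    (hs : s ++ [.fm (.all y B), .fm (B.subst (subst1 y (.var β)))] ++ s' ∈ F.brList)
    (hr : r ++ [.fm (.all y' B'), .fm (B'.subst (subst1 y' (.var β)))] ++ r' ∈ T.branches) :
    False := by
  have hs' : (.fm (.all x A) :: s) ++ [.fm (.all y B), .fm (B.subst (subst1 y (.var β)))] ++ s'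
      ∈ EItem.branches (.inl (ETree.all x A α F)) :=
    EItem.cons_mem_branches_all hs
  obtain ⟨rfl, hyB, -⟩ := hWR _ hS _ hT _ _ _ _ _ _ _ _ _ hs' hr
  obtain ⟨rfl, rfl⟩ := Formula.all.inj hyB
  obtain ⟨G, hG, hbG⟩ := hr
  obtain ⟨γ, E₀, rfl, hshE₀, hc⟩ :=
    (hWFT.of_mem_trees_s12 hG).eq_all_of_cons_mem_brList (c := s ++ _ :: _ :: r') (by simpa using hbG)
  have hγ : γ ≠ α := fun h => hαT ⟨_, hG, h ▸ by simp [ETree.eigenList]⟩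
  have hA : A.subst (subst1 x (.var γ)) = A.subst (subst1 x (.var α)) := by
    obtain ⟨t, ht⟩ := ETree.exists_eq_cons_sh_of_mem_brList hs
    obtain ⟨t', ht'⟩ := ETree.exists_eq_cons_sh_of_mem_brList hc
    -- in both branches the entry after `∀xA` is the shallow formula of `F`, resp. `E₀`
    rw [← hshE₀, ← hsh]
    rcases s with _ | ⟨e, s⟩ <;> simp_all
  exact hWR.not_instance_below hS hF hsh
    ((Formula.subst_subst1_var_const hγ hA β).trans hA) s s' y B hs

end WeakRegular

theorem mem_shSeq {P : EProof} {G : Formula} :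
    G ∈ shSeq P ↔ ∃ E, Sum.inl E ∈ P ∧ E.sh = G := by
  simp only [shSeq, List.mem_filterMap]
  constructor
  · rintro ⟨it | c, hit, h⟩
    · exact ⟨_, hit, Option.some.inj h⟩
    · simp at h
  · rintro ⟨E, hE, rfl⟩
    exact ⟨_, hE, rfl⟩

def TPos.unstrip (n : ℕ) (q : TPos) : TPos :=
  ⟨q.item, q.comp, if q.item < n then 0 :: q.path else q.path⟩

def Occ.unstrip (n : ℕ) : Occ → Occ
  | .cut i => .cut i
  | .allO q => .allO (q.unstrip n)
  | .exO q k => .exO (q.unstrip n) k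

theorem Occ.pos_unstrip {n : ℕ} {o : Occ} {q : TPos} (h : o.pos = some q) :
    (o.unstrip n).pos = some (q.unstrip n) := by
  cases o <;> simp_all [Occ.pos, Occ.unstrip]

theorem Occ.scope_unstrip {n i c : ℕ} {p : List ℕ} {o : Occ} (h : o.scope = some (i, c, p)) :
    (o.unstrip n).scope = some (i, c, if i < n then 0 :: p else p) := by
  cases o <;> simp only [Occ.scope, Occ.unstrip, TPos.unstrip, Option.some.injEq,
    Prod.mk.injEq, reduceCtorEq] at h ⊢ <;> obtain ⟨rfl, rfl, rfl⟩ := h <;> split_ifs <;> simp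

section Strip

variable {x : ℕ} {A : Formula} {α : ℕ} {Fs : List ETree} {P' : EProof}

local notation "𝒫" => (Fs.map fun F => Sum.inl (ETree.all x A α F)) ++ P'
local notation "𝒬" => Fs.map Sum.inl ++ P'

theorem getElem?_strip_of_lt {i : ℕ} (hi : i < Fs.length) :
    (𝒬)[i]? = some (.inl Fs[i]) ∧ (𝒫)[i]? = some (.inl (ETree.all x A α Fs[i])) := by
  simp [List.getElem?_append_left, hi]

theorem getElem?_strip_of_le {i : ℕ} (hi : Fs.length ≤ i) : (𝒬)[i]? = (𝒫)[i]? := by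
  simp [List.getElem?_append_right, hi]

theorem treeAt_unstrip {q : TPos} {E : ETree} (h : treeAt 𝒬 q = some E) :
    treeAt 𝒫 (q.unstrip Fs.length) = some E := by
  obtain ⟨i, c, p⟩ := q
  unfold treeAt TPos.unstrip at *
  by_cases hi : i < Fs.length
  · obtain ⟨h𝒬, h𝒫⟩ := getElem?_strip_of_lt (x := x) (A := A) (α := α) (P' := P') hi
    rw [h𝒬] at h
    rw [if_pos hi, h𝒫]
    rcases c with _ | c
    · simpa [EItem.trees, ETree.atPath] using h
    · simp [EItem.trees] at h
  · rw [if_neg hi, ← getElem?_strip_of_le (Nat.le_of_not_lt hi)]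
    exact h

theorem getElem?_inr_unstrip {i : ℕ} {c : ETree × ETree} (h : (𝒬)[i]? = some (.inr c)) :
    (𝒫)[i]? = some (.inr c) := by
  by_cases hi : i < Fs.length
  · simp [(getElem?_strip_of_lt (x := x) (A := A) (α := α) (P' := P') hi).1] at h
  · rwa [← getElem?_strip_of_le (Nat.le_of_not_lt hi)]

theorem validOcc_unstrip {o : Occ} (h : ValidOcc 𝒬 o) :
    ValidOcc 𝒫 (o.unstrip Fs.length) := by
  cases o with
  | cut i =>
    obtain ⟨c, hc⟩ := h
    exact ⟨c, getElem?_inr_unstrip hc⟩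
  | allO q =>
    obtain ⟨y, B, β, E, hE⟩ := h
    exact ⟨y, B, β, E, treeAt_unstrip hE⟩
  | exO q k =>
    obtain ⟨y, B, es, hE, hk⟩ := h
    exact ⟨y, B, es, treeAt_unstrip hE, hk⟩

theorem allEigen_unstrip {q : TPos} {β : ℕ} (h : AllEigen 𝒬 q β) :
    AllEigen 𝒫 (q.unstrip Fs.length) β := by
  obtain ⟨y, B, E, hE⟩ := h
  exact ⟨y, B, E, treeAt_unstrip hE⟩

theorem exTerm_unstrip {q : TPos} {k : ℕ} {t : Term} (h : ExTerm 𝒬 q k t) :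
    ExTerm 𝒫 (q.unstrip Fs.length) k t := by
  obtain ⟨y, B, es, e, hE, he, ht⟩ := h
  exact ⟨y, B, es, e, treeAt_unstrip hE, he, ht⟩

theorem dominates_unstrip {v w : Occ} (h : Dominates 𝒬 v w) :
    Dominates 𝒫 (v.unstrip Fs.length) (w.unstrip Fs.length) := by
  obtain ⟨hv, hw, i, c, q, pw, r, hscope, hpos, rfl, rfl, hpath⟩ := h
  refine ⟨validOcc_unstrip hv, validOcc_unstrip hw, pw.item, pw.comp, _, pw.unstrip Fs.length, r,
    Occ.scope_unstrip hscope, Occ.pos_unstrip hpos, rfl, rfl, ?_⟩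
  simp only [TPos.unstrip, hpath]
  split_ifs <;> simp

theorem dep0_unstrip {v w : Occ} (h : Dep0 𝒬 v w) :
    Dep0 𝒫 (v.unstrip Fs.length) (w.unstrip Fs.length) := by
  obtain ⟨hv, hw, hcase⟩ := h
  refine ⟨validOcc_unstrip hv, validOcc_unstrip hw, ?_⟩
  rcases hcase with ⟨p, β, rfl, hp, q, k, t, rfl, hq, hβ⟩ | hdom | ⟨i, rfl, q, hq, rfl⟩ |
    ⟨p, β, i, c, rfl, hp, rfl, hc, hβ⟩
  · exact Or.inl ⟨_, β, rfl, allEigen_unstrip hp, _, k, t, rfl, exTerm_unstrip hq, hβ⟩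
  · exact Or.inr (Or.inl (dominates_unstrip hdom))
  · exact Or.inr (Or.inr (Or.inl ⟨_, rfl, _, Occ.pos_unstrip hq, rfl⟩))
  · exact Or.inr (Or.inr (Or.inr
      ⟨_, β, i, c, rfl, allEigen_unstrip hp, rfl, getElem?_inr_unstrip hc, hβ⟩))

theorem DepAcyclic.strip (h : DepAcyclic 𝒫) : DepAcyclic 𝒬 := fun o ho =>
  h _ (Relation.TransGen.lift (Occ.unstrip Fs.length) (fun _ _ => dep0_unstrip) o o ho)

theorem mem_and_wf_of_mem (hWF : ∀ it ∈ 𝒫, EItem.WF it) (F : ETree) (hF : F ∈ Fs) :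
    Sum.inl (ETree.all x A α F) ∈ 𝒫 ∧ F.WF ∧ F.sh = A.subst (subst1 x (.var α)) := by
  have hS : Sum.inl (ETree.all x A α F) ∈ 𝒫 :=
    List.mem_append_left _ (List.mem_map_of_mem (f := fun F => Sum.inl (ETree.all x A α F)) hF)
  exact ⟨hS, (hWF _ hS).of_all⟩

theorem WeakRegular.strip (hWR : WeakRegular 𝒫) (hWF : ∀ it ∈ 𝒫, EItem.WF it)
    (hα : ∀ it ∈ P', ¬ EItem.hasEigen α it) : WeakRegular 𝒬 := by
  have hP' : ∀ T ∈ P', T ∈ 𝒫 ∧ T.WF := fun T hT =>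
    ⟨List.mem_append_right _ hT, hWF _ (List.mem_append_right _ hT)⟩
  intro S hS T hT s s' r r' y y' β B B' hs hr
  simp only [List.mem_append, List.mem_map] at hS hT
  rcases hS with ⟨F, hF, rfl⟩ | hS <;> rcases hT with ⟨G, hG, rfl⟩ | hT
  · rw [EItem.mem_branches_inl] at hs hr
    obtain ⟨h, hyB, -⟩ := hWR _ (mem_and_wf_of_mem hWF F hF).1 _ (mem_and_wf_of_mem hWF G hG).1
      (.fm (.all x A) :: s) s' (.fm (.all x A) :: r) r' y y' β B B'
      (EItem.cons_mem_branches_all hs) (EItem.cons_mem_branches_all hr)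
    exact ⟨List.cons_injective h, hyB, Iff.rfl⟩
  · rw [EItem.mem_branches_inl] at hs
    obtain ⟨hS, hF, hsh⟩ := mem_and_wf_of_mem hWF F hF
    exact (hWR.false_of_shared_instance hS hF hsh (hP' T hT).1 (hP' T hT).2 (hα T hT) hs hr).elim
  · rw [EItem.mem_branches_inl] at hr
    obtain ⟨hT, hG, hsh⟩ := mem_and_wf_of_mem hWF G hG
    exact (hWR.false_of_shared_instance hT hG hsh (hP' S hS).1 (hP' S hS).2 (hα S hS) hr hs).elim
  · exact hWR S (hP' S hS).1 T (hP' T hT).1 s s' r r' y y' β B B' hs hr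

theorem EigenCond.strip (hEC : EigenCond 𝒫) (hWR : WeakRegular 𝒫)
    (hWF : ∀ it ∈ 𝒫, EItem.WF it) (hα : ∀ it ∈ P', ¬ EItem.hasEigen α it) :
    EigenCond 𝒬 := by
  intro q β hq G hG hβG
  have hβ𝒫 := hEC _ β (allEigen_unstrip hq)
  obtain ⟨E, hE, rfl⟩ := mem_shSeq.1 hG
  rcases List.mem_append.1 hE with hE | hE
  · obtain ⟨hS, -, hsh⟩ := mem_and_wf_of_mem hWF E (by simpa using hE)
    rw [hsh] at hβG
    rcases Formula.mem_varList_subst1 hβG with rfl | hβA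
    · obtain ⟨it, hit, hβit⟩ := hq.exists_hasEigen
      rcases List.mem_append.1 hit with hit | hit
      · obtain ⟨F, hF, rfl⟩ := List.mem_map.1 hit
        obtain ⟨hS', hFWF, hsh'⟩ := mem_and_wf_of_mem hWF F hF
        exact hWR.not_mem_eigenList hS' hFWF hsh' (by simpa [EItem.hasEigen, EItem.trees] using hβit)
      · exact hα it hit hβit
    · exact hβ𝒫 _ (mem_shSeq.2 ⟨_, hS, rfl⟩) (List.mem_cons_of_mem _ hβA)
  · exact hβ𝒫 _ (mem_shSeq.2 ⟨_, List.mem_append_right _ hE, rfl⟩) hβG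

theorem forall_wf_strip (hWF : ∀ it ∈ 𝒫, EItem.WF it) : ∀ it ∈ 𝒬, EItem.WF it := by
  simp only [List.mem_append, List.mem_map]
  rintro it (⟨F, hF, rfl⟩ | hit)
  exacts [(mem_and_wf_of_mem hWF F hF).2.1, hWF it (List.mem_append_right _ hit)]

theorem dpSeq_strip : dpSeq 𝒬 = dpSeq 𝒫 := by
  simp [dpSeq, ETree.dp]

end Strip

theorem min_all_strip_general (x : ℕ) (A : Formula) (α : ℕ)
    (Fs : List ETree) (P' : EProof)
    (hP : IsExpansionProof ((Fs.map fun F => Sum.inl (ETree.all x A α F)) ++ P'))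
    (hα : ∀ it ∈ P', ¬ EItem.hasEigen α it) :
    IsExpansionProof (Fs.map Sum.inl ++ P') := by
  obtain ⟨hWF, hWR, hAC, hTaut, hEC⟩ := hP
  exact ⟨forall_wf_strip hWF, hWR.strip hWF hα, hAC.strip, dpSeq_strip ▸ hTaut, hEC.strip hWR hWF hα⟩

/-- stripping a `<_P`-minimal top-level ∀-expansion `+^α`
    (not occurring in the rest `P'`) from an expansion proof yields an
    expansion proof. -/
theorem min_all_strip (x : ℕ) (A : Formula) (α : ℕ)
    (Fs : List ETree) (P' : EProof) (hne : Fs ≠ [])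
    (hP : IsExpansionProof ((Fs.map fun F => Sum.inl (ETree.all x A α F)) ++ P'))
    (hmin : ∀ i < Fs.length, ∀ o : Occ,
      ¬ Dep ((Fs.map fun F => Sum.inl (ETree.all x A α F)) ++ P') o
          (Occ.allO ⟨i, 0, []⟩))
    (hα : ∀ it ∈ P', ¬ EItem.hasEigen α it) :
    IsExpansionProof (Fs.map Sum.inl ++ P') :=
  min_all_strip_general x A α Fs P' hP hα
end

section
/- Let Q be an expansion proof. The relation ≺ on ∼-equivalence classes of cuts of Q, defined by A ≺ B iff there exists C ∈ A with C <_Q D for every D ∈ B, is acyclic: there is no sequence of classes A1 ≺ A2 ≺ ⋯ ≺ An ≺ A1. -/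
/-! A cycle `A₁ ≺ ⋯ ≺ Aₙ ≺ A₁` collapses to `A₁ ≺ A₁` because `≺` is transitive (the witness
chosen in the middle class is one of the cuts the first witness must lie below). But `A ≺ A`
yields a cut `C ∈ A` with `C <_Q D` for every `D ∈ A`, in particular `C <_Q C`, contradicting
the acyclicity of `<_Q`. -/

theorem CutSim.symm {c d : ETree × ETree} (h : CutSim c d) : CutSim d c := by
  obtain ⟨x, A, es, α, F, es', α', F', rfl, rfl⟩ := h
  exact ⟨x, A, es', α', F', es, α, F, rfl, rfl⟩

theorem CutSim.trans {c d e : ETree × ETree} (hcd : CutSim c d) (hde : CutSim d e) :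
    CutSim c e := by
  obtain ⟨x, A, es, α, F, es', α', F', rfl, rfl⟩ := hcd
  obtain ⟨x₂, A₂, es₂, α₂, F₂, es₂', α₂', F₂', hd, rfl⟩ := hde
  simp only [Prod.mk.injEq, ETree.ex.injEq, ETree.all.injEq] at hd
  obtain ⟨⟨rfl, rfl, -⟩, -⟩ := hd
  exact ⟨x, A, es, α, F, es₂', α₂', F₂', rfl, rfl⟩

namespace SimIdx

variable {P : EProof} {i j k : ℕ}

theorem symm (h : SimIdx P i j) : SimIdx P j i := by
  rcases h with ⟨rfl, hi⟩ | ⟨c, d, hi, hj, hcd⟩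
  · exact Or.inl ⟨rfl, hi⟩
  · exact Or.inr ⟨d, c, hj, hi, hcd.symm⟩

theorem trans (hij : SimIdx P i j) (hjk : SimIdx P j k) : SimIdx P i k := by
  rcases hij with ⟨rfl, -⟩ | ⟨c, d, hi, hj, hcd⟩
  · exact hjk
  rcases hjk with ⟨rfl, -⟩ | ⟨d', e, hj', hk, hde⟩
  · exact Or.inr ⟨c, d, hi, hj, hcd⟩
  obtain rfl : d = d' := by simpa [hj] using hj'
  exact Or.inr ⟨c, e, hi, hk, hcd.trans hde⟩

end SimIdx

instance ClassLt.isTrans (P : EProof) : IsTrans ℕ (ClassLt P) where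
  trans _ _ _ := fun ⟨i', hi', hbelow_j⟩ ⟨j', hj', hbelow_k⟩ =>
    ⟨i', hi', fun k' hk' => (hbelow_j j' hj').trans (hbelow_k k' hk')⟩

theorem not_simIdx_of_classLt {P : EProof} (hP : DepAcyclic P) {i j : ℕ}
    (hij : ClassLt P i j) : ¬ SimIdx P j i := by
  intro hji
  obtain ⟨i', hi', hbelow⟩ := hij
  exact hP _ (hbelow i' (hi'.trans hji.symm))

/-- the relation `≺` on ∼-equivalence classes of cuts of an
    expansion proof is acyclic: there is no sequence of classes
    `A₁ ≺ A₂ ≺ ⋯ ≺ Aₙ ≺ A₁`. -/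
theorem classLt_acyclic (Q : EProof) (hQ : IsExpansionProof Q) :
    ∀ i j, Relation.TransGen (ClassLt Q) i j → ¬ SimIdx Q j i := by
  intro i j hij
  rw [Relation.transGen_eq_self] at hij
  exact not_simIdx_of_classLt hQ.2.2.1 hij
end

section
/- Let Q be an expansion proof and let A, B be ∼-equivalence classes of cuts of Q. If there exist C ∈ A and D ∈ B with C <_Q D, then A ≺ B, i.e. C <_Q E for every E ∈ B. -/
/-! The only immediate dependency `v <⁰ D` into a cut `D` comes from a ∀-expansion `v` whose
eigenvariable occurs in the shallow formula of `D`. Equivalent cuts share their shallow formula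
`∃x A`, so such an edge also enters every cut `E ∼ D`; redirecting the last step of a chain
`C <_Q D` therefore gives `C <_Q E`. -/

lemma CutSim.fst_sh_eq {c d : ETree × ETree} (h : CutSim c d) : c.1.sh = d.1.sh := by
  obtain ⟨x, A, es, α, F, es', α', F', rfl, rfl⟩ := h
  rfl

lemma Dep0.exists_eigen_mem_of_cut {P : EProof} {v : Occ} {j : ℕ} (h : Dep0 P v (.cut j)) :
    ∃ p α c, v = .allO p ∧ AllEigen P p α ∧ P[j]? = some (Sum.inr c) ∧ α ∈ c.1.sh.varList := by
  obtain ⟨-, -, ⟨-, -, _, _, q, k, t, hw, -⟩ | ⟨-, -, _, _, _, _, _, _, hpos, -⟩ |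
      ⟨_, -, q, hpos, -⟩ | ⟨p, α, i, c, hv, hα, hw, hc, hmem⟩⟩ := h
  · cases hw
  · cases hpos
  · cases hpos
  · cases hw
    exact ⟨p, α, c, hv, hα, hc, hmem⟩

lemma Dep0.cut_of_simIdx {P : EProof} {v : Occ} {j j' : ℕ} (h : Dep0 P v (.cut j))
    (hs : SimIdx P j' j) : Dep0 P v (.cut j') := by
  rcases hs with ⟨rfl, -⟩ | ⟨c', d, hc', hd, hsim⟩
  · exact h
  obtain ⟨p, α, c, rfl, hα, hc, hmem⟩ := h.exists_eigen_mem_of_cut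
  obtain rfl : d = c := by simpa [hd] using hc
  refine ⟨h.1, ⟨c', hc'⟩, Or.inr <| Or.inr <| Or.inr ⟨p, α, j', c', rfl, hα, rfl, hc', ?_⟩⟩
  rwa [hsim.fst_sh_eq]

lemma Dep.cut_of_simIdx {P : EProof} {v : Occ} {j j' : ℕ} (h : Dep P v (.cut j))
    (hs : SimIdx P j' j) : Dep P v (.cut j') := by
  obtain ⟨w, hvw, hwj⟩ := Relation.TransGen.tail'_iff.mp h
  exact Relation.TransGen.tail' hvw (hwj.cut_of_simIdx hs)

theorem classLt_of_dep_general (Q : EProof) (i j : ℕ)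
    (hdep : Dep Q (Occ.cut i) (Occ.cut j)) :
    ∀ j', SimIdx Q j' j → Dep Q (Occ.cut i) (Occ.cut j') :=
  fun _ hs => hdep.cut_of_simIdx hs

/-- if some cut of the class `A` is `<_Q`-below some cut of
    the class `B`, then it is `<_Q`-below every cut of the class `B`,
    i.e. `A ≺ B`. -/
theorem classLt_of_dep (Q : EProof) (hQ : IsExpansionProof Q) (i j : ℕ)
    (hi : IsCutIdx Q i) (hj : IsCutIdx Q j)
    (hdep : Dep Q (Occ.cut i) (Occ.cut j)) :
    ∀ j', SimIdx Q j' j → Dep Q (Occ.cut i) (Occ.cut j') :=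
  classLt_of_dep_general Q i j hdep
end
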